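/- Let ⟨·,·⟩ be a real inner product on su(2), let X₁, X₂, X₃ be an orthonormal basis with structure matrix C, let T be a real 3×3 orthogonal matrix (TᵗT = I), and let X̃ⱼ = Σᵢ Tᵢⱼ Xᵢ with structure matrix C̃. Then C̃ = (det T) · Tᵗ C T. -/
import Mathlib


open Matrix BigOperators

/-- The structure matrix `C = [[c¹₂₃, c¹₃₁, c¹₁₂], [c²₂₃, c²₃₁, c²₁₂], [c³₂₃, c³₃₁, c³₁₂]]`
associated to structure constants `c^k_{ij}` (indices shifted down by one). -/
def structureMatrix (c : Fin 3 → Fin 3 → Fin 3 → ℝ) : Matrix (Fin 3) (Fin 3) ℝ :=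
  !![c 0 1 2, c 0 2 0, c 0 0 1;
     c 1 1 2, c 1 2 0, c 1 0 1;
     c 2 1 2, c 2 2 0, c 2 0 1]

/-- Let `B` be a real inner product on `su(2)`, let `X₁, X₂, X₃` be an
orthonormal basis with structure matrix `C`, let `T` be an orthogonal `3×3` real matrix,
and let `X̃ⱼ = ∑ᵢ Tᵢⱼ Xᵢ` with structure matrix `C̃`. Then `C̃ = (det T) · Tᵗ C T`. -/
theorem structure_matrix_change_of_frame
    (B : Matrix (Fin 2) (Fin 2) ℂ →ₗ[ℝ] Matrix (Fin 2) (Fin 2) ℂ →ₗ[ℝ] ℝ)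
    (hsymm : ∀ A A' : Matrix (Fin 2) (Fin 2) ℂ, B A A' = B A' A)
    (hpos : ∀ A : Matrix (Fin 2) (Fin 2) ℂ, Aᴴ = -A → A.trace = 0 → A ≠ 0 → 0 < B A A)
    (X : Fin 3 → Matrix (Fin 2) (Fin 2) ℂ)
    (hmem : ∀ i, (X i)ᴴ = -X i ∧ (X i).trace = 0)
    (hind : LinearIndependent ℝ X)
    (hspan : ∀ A : Matrix (Fin 2) (Fin 2) ℂ, Aᴴ = -A → A.trace = 0 →
      A ∈ Submodule.span ℝ (Set.range X))
    (hortho : ∀ i j, B (X i) (X j) = if i = j then 1 else 0)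
    (c : Fin 3 → Fin 3 → Fin 3 → ℝ)
    (hc : ∀ i j, X i * X j - X j * X i = ∑ k, c k i j • X k)
    (T : Matrix (Fin 3) (Fin 3) ℝ) (hT : Tᵀ * T = 1)
    (Xt : Fin 3 → Matrix (Fin 2) (Fin 2) ℂ)
    (hXt : ∀ j, Xt j = ∑ i, T i j • X i)
    (ct : Fin 3 → Fin 3 → Fin 3 → ℝ)
    (hct : ∀ i j, Xt i * Xt j - Xt j * Xt i = ∑ k, ct k i j • Xt k) :
    structureMatrix ct = T.det • (Tᵀ * structureMatrix c * T) := by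
  have hind' : ∀ g : Fin 3 → ℝ, (∑ m, g m • X m) = 0 → ∀ m, g m = 0 :=
    Fintype.linearIndependent_iff.mp hind
  -- antisymmetry of the structure constants
  have hzero : ∀ m a, c m a a = 0 := by
    intro m a
    refine hind' (fun k => c k a a) ?_ m
    rw [← hc a a, sub_self]
  have hskew : ∀ m a b, c m b a = -c m a b := by
    intro m a b
    have h : ∑ k, (c k a b + c k b a) • X k = 0 := by
      simp only [add_smul, Finset.sum_add_distrib, ← hc]
      abel
    have := hind' _ h m
    linarith
  -- expansion of products of the new basis
  have mul_expand : ∀ p q, Xt p * Xt q = ∑ a, ∑ b, (T a p * T b q) • (X a * X b) := by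
    intro p q
    rw [hXt p, hXt q, Finset.sum_mul]
    refine Finset.sum_congr rfl fun a _ => ?_
    rw [Finset.mul_sum]
    refine Finset.sum_congr rfl fun b _ => ?_
    rw [smul_mul_assoc, mul_smul_comm, smul_smul]
  -- the coefficient identity from linear independence
  have key : ∀ i j m, (∑ k, ct k i j * T m k) = ∑ a, ∑ b, T a i * T b j * c m a b := by
    intro i j
    have lhsE : Xt i * Xt j - Xt j * Xt i
        = ∑ m, (∑ a, ∑ b, T a i * T b j * c m a b) • X m := by
      rw [mul_expand i j, mul_expand j i]
      rw [Finset.sum_comm (s := Finset.univ) (t := Finset.univ)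
        (f := fun a b => (T a j * T b i) • (X a * X b))]
      rw [← Finset.sum_sub_distrib]
      simp only [← Finset.sum_sub_distrib]
      have : ∀ a b : Fin 3, (T a i * T b j) • (X a * X b) - (T b j * T a i) • (X b * X a)
          = (T a i * T b j) • (X a * X b - X b * X a) := by
        intro a b
        rw [smul_sub, mul_comm (T b j) (T a i)]
      simp only [this, hc, Finset.smul_sum, smul_smul]
      have swap : (∑ a : Fin 3, ∑ b : Fin 3, ∑ k : Fin 3, (T a i * T b j * c k a b) • X k)
          = ∑ k : Fin 3, ∑ a : Fin 3, ∑ b : Fin 3, (T a i * T b j * c k a b) • X k := by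
        rw [show (∑ a : Fin 3, ∑ b : Fin 3, ∑ k : Fin 3, (T a i * T b j * c k a b) • X k)
            = ∑ a : Fin 3, ∑ k : Fin 3, ∑ b : Fin 3, (T a i * T b j * c k a b) • X k
          from Finset.sum_congr rfl fun a _ => Finset.sum_comm]
        exact Finset.sum_comm
      rw [swap]
      refine Finset.sum_congr rfl fun m _ => ?_
      rw [Finset.sum_smul]
      refine Finset.sum_congr rfl fun a _ => ?_
      rw [Finset.sum_smul]
    have rhsE : (∑ k, ct k i j • Xt k) = ∑ m, (∑ k, ct k i j * T m k) • X m := by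
      simp only [hXt, Finset.smul_sum, smul_smul]
      rw [Finset.sum_comm]
      refine Finset.sum_congr rfl fun m _ => ?_
      rw [Finset.sum_smul]
    have h0 : ∑ m, ((∑ k, ct k i j * T m k) - ∑ a, ∑ b, T a i * T b j * c m a b) • X m = 0 := by
      simp only [sub_smul, Finset.sum_sub_distrib, ← rhsE, ← lhsE, ← hct i j, sub_self]
    intro m
    have := hind' _ h0 m
    linarith
  -- orthogonality entrywise
  have hTT : ∀ k k' : Fin 3, (∑ m, T m k * T m k') = if k = k' then 1 else 0 := by
    intro k k'
    have h := congrFun (congrFun hT k) k'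
    simpa [Matrix.mul_apply, Matrix.transpose_apply, Matrix.one_apply] using h
  -- solve for the new structure constants
  have hctf : ∀ k i j, ct k i j = ∑ m, T m k * ∑ a, ∑ b, T a i * T b j * c m a b := by
    intro k i j
    have : (∑ m, T m k * ∑ a, ∑ b, T a i * T b j * c m a b)
        = ∑ m, T m k * ∑ k', ct k' i j * T m k' := by
      refine Finset.sum_congr rfl fun m _ => ?_
      rw [key i j m]
    rw [this]
    have : (∑ m, T m k * ∑ k', ct k' i j * T m k')
        = ∑ k', ct k' i j * ∑ m, T m k * T m k' := by
      simp only [Finset.mul_sum]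
      rw [Finset.sum_comm]
      refine Finset.sum_congr rfl fun k' _ => ?_
      refine Finset.sum_congr rfl fun m _ => ?_
      ring
    rw [this]
    simp only [hTT]
    simp
  -- `det T • Tᵀ = adjugate T`
  have h1 : T * Tᵀ = 1 := mul_eq_one_comm.mp hT
  have hadj : T.det • T = (adjugate T)ᵀ := by
    have : adjugate T = T.det • Tᵀ := by
      calc adjugate T = adjugate T * (T * Tᵀ) := by rw [h1, Matrix.mul_one]
        _ = (adjugate T * T) * Tᵀ := by rw [Matrix.mul_assoc]
        _ = (T.det • (1 : Matrix (Fin 3) (Fin 3) ℝ)) * Tᵀ := by rw [Matrix.adjugate_mul]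
        _ = T.det • Tᵀ := by rw [Matrix.smul_mul, Matrix.one_mul]
    rw [this, Matrix.transpose_smul, Matrix.transpose_transpose]
  have hgoal : T.det • (Tᵀ * structureMatrix c * T)
      = Tᵀ * structureMatrix c * (adjugate T)ᵀ := by
    rw [← hadj, Matrix.mul_smul]
  rw [hgoal]
  have h10 : ∀ m, c m 1 0 = -c m 0 1 := fun m => hskew m 0 1
  have h20 : ∀ m, c m 2 0 = -c m 0 2 := fun m => hskew m 0 2
  have h21 : ∀ m, c m 2 1 = -c m 1 2 := fun m => hskew m 1 2
  have hSM : ∀ (f : Fin 3 → Fin 3 → Fin 3 → ℝ) (k : Fin 3),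
      structureMatrix f k 0 = f k 1 2 ∧ structureMatrix f k 1 = f k 2 0 ∧
        structureMatrix f k 2 = f k 0 1 := by
    intro f k
    fin_cases k <;> exact ⟨rfl, rfl, rfl⟩
  ext k l
  have hR : ∀ l' : Fin 3, (Tᵀ * structureMatrix c * (adjugate T)ᵀ) k l'
      = ∑ p, (∑ m, T m k * structureMatrix c m p) * adjugate T l' p := by
    intro l'
    simp [Matrix.mul_apply, Matrix.transpose_apply]
  have hl : l = 0 ∨ l = 1 ∨ l = 2 := by revert l; decide
  have hSMc0 : ∀ m : Fin 3, structureMatrix c m 0 = c m 1 2 := fun m => (hSM c m).1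
  have hSMc1 : ∀ m : Fin 3, structureMatrix c m 1 = c m 2 0 := fun m => (hSM c m).2.1
  have hSMc2 : ∀ m : Fin 3, structureMatrix c m 2 = c m 0 1 := fun m => (hSM c m).2.2
  rcases hl with rfl | rfl | rfl
  · rw [(hSM ct k).1, hctf, hR]
    rw [Matrix.adjugate_fin_three]
    simp only [Fin.sum_univ_three, hSMc0, hSMc1, hSMc2, Matrix.cons_val', Matrix.cons_val_zero,
      Matrix.cons_val_one, Matrix.head_cons, Matrix.empty_val', Matrix.cons_val_fin_one,
      Matrix.head_fin_const, Matrix.of_apply, Matrix.cons_val_two, Matrix.tail_cons, Fin.isValue, hzero, h10, h20, h21]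
    ring
  · rw [(hSM ct k).2.1, hctf, hR]
    rw [Matrix.adjugate_fin_three]
    simp only [Fin.sum_univ_three, hSMc0, hSMc1, hSMc2, Matrix.cons_val', Matrix.cons_val_zero,
      Matrix.cons_val_one, Matrix.head_cons, Matrix.empty_val', Matrix.cons_val_fin_one,
      Matrix.head_fin_const, Matrix.of_apply, Matrix.cons_val_two, Matrix.tail_cons, Fin.isValue, hzero, h10, h20, h21]
    ring
  · rw [(hSM ct k).2.2, hctf, hR]
    rw [Matrix.adjugate_fin_three]
    simp only [Fin.sum_univ_three, hSMc0, hSMc1, hSMc2, Matrix.cons_val', Matrix.cons_val_zero,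
      Matrix.cons_val_one, Matrix.head_cons, Matrix.empty_val', Matrix.cons_val_fin_one,
      Matrix.head_fin_const, Matrix.of_apply, Matrix.cons_val_two, Matrix.tail_cons, Fin.isValue, hzero, h10, h20, h21]
    ring
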